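/- Fix an integer n ≥ 2 and reals b₁ > b₂ ≥ … ≥ bₙ > 0, and let r ∈ ℝⁿ with rᵢ > 0 for all i. Set T = min(2π/b₂, 4π/b₁). Then every point τ of the open interval (2π/b₁, T) satisfies sin(bᵢτ/2) ≠ 0 for all i, and there exists exactly one τ ∈ (2π/b₁, T) such that ψ(τ, r) = 0. -/

import Mathlib

open Real Finset Set

/-- `ψ(τ, r) = Σ_{i=1}^{n} (rᵢ²/2)·(3τ − bᵢτ²·cos(bᵢτ/2)/sin(bᵢτ/2) − sin(bᵢτ)/bᵢ)`. -/
noncomputable def psiSum (n : ℕ) (b r : ℕ → ℝ) (τ : ℝ) : ℝ :=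
  ∑ i ∈ Finset.Icc 1 n, (r i) ^ 2 / 2 *
    (3 * τ - b i * τ ^ 2 * Real.cos (b i * τ / 2) / Real.sin (b i * τ / 2) -
      Real.sin (b i * τ) / b i)

/-! Writing `x = bτ/2`, the summand `3τ − bτ² cot x − sin(bτ)/b` of `ψ` has derivative
`(2 (x − sin x cos x)² + 4 sin⁴ x) / sin² x > 0` wherever `sin x ≠ 0`, so `ψ` is strictly
increasing on `(2π/b₁, T)`, where no `sin(bᵢτ/2)` vanishes. Since `cot` tends to `+∞` just right
of each zero of `sin` and to `−∞` just left of it, a summand whose `sin(bτ/2)` vanishes at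
`τ₀ > 0` tends to `−∞` as `τ → τ₀⁺` and to `+∞` as `τ → τ₀⁻`, while the other summands stay
bounded on the relevant side. At `2π/b₁` this happens for `i = 1`, at `T` for `i = 2` or `i = 1`;
so `ψ` increases from `−∞` to `+∞` on `(2π/b₁, T)` and vanishes exactly once there. -/

open Filter Topology

lemma Filter.Tendsto.finset_sum_atTop {ι α G : Type*} [AddCommGroup G] [PartialOrder G]
    [IsOrderedAddMonoid G] {s : Finset ι} {f : ι → α → G}
    {l : Filter α} {i₀ : ι} (hi₀ : i₀ ∈ s) (htop : Tendsto (f i₀) l atTop)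
    (hbdd : ∀ i ∈ s, IsBoundedUnder (· ≥ ·) l (f i)) :
    Tendsto (fun x => ∑ i ∈ s, f i x) l atTop := by
  classical
  obtain ⟨C, hC⟩ := isBoundedUnder_ge_sum (s.erase i₀) fun i hi => hbdd i (mem_of_mem_erase hi)
  refine (tendsto_atTop_add_right_of_le' l C htop ?_).congr fun x => add_sum_erase s (f · x) hi₀
  simpa only [eventually_map, Finset.sum_apply] using hC

lemma Filter.Tendsto.finset_sum_atBot {ι α G : Type*} [AddCommGroup G] [PartialOrder G]
    [IsOrderedAddMonoid G] {s : Finset ι} {f : ι → α → G}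
    {l : Filter α} {i₀ : ι} (hi₀ : i₀ ∈ s) (hbot : Tendsto (f i₀) l atBot)
    (hbdd : ∀ i ∈ s, IsBoundedUnder (· ≤ ·) l (f i)) :
    Tendsto (fun x => ∑ i ∈ s, f i x) l atBot := by
  classical
  obtain ⟨C, hC⟩ := isBoundedUnder_le_sum (s.erase i₀) fun i hi => hbdd i (mem_of_mem_erase hi)
  refine (tendsto_atBot_add_right_of_ge' l C hbot ?_).congr fun x => add_sum_erase s (f · x) hi₀
  simpa only [eventually_map, Finset.sum_apply] using hC

lemma StrictMonoOn.existsUnique_mem_Ioo_eq_zero {f : ℝ → ℝ} {a b : ℝ}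
    (hmono : StrictMonoOn f (Ioo a b)) (hab : a < b) (hcont : ContinuousOn f (Ioo a b))
    (hbot : Tendsto f (𝓝[>] a) atBot) (htop : Tendsto f (𝓝[<] b) atTop) :
    ∃! x, x ∈ Ioo a b ∧ f x = 0 := by
  obtain ⟨x₁, hx₁, hx₁a⟩ :=
    ((hbot.eventually (eventually_lt_atBot 0)).and (Ioo_mem_nhdsGT hab)).exists
  obtain ⟨x₂, hx₂, hx₂b⟩ :=
    ((htop.eventually (eventually_gt_atTop 0)).and (Ioo_mem_nhdsLT hab)).exists
  have hsub : Icc x₁ x₂ ⊆ Ioo a b := Icc_subset_Ioo hx₁a.1 hx₂b.2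
  have hle : x₁ ≤ x₂ := ((hmono.lt_iff_lt hx₁a hx₂b).1 (hx₁.trans hx₂)).le
  obtain ⟨x, hx, hx0⟩ := intermediate_value_Icc hle (hcont.mono hsub) ⟨hx₁.le, hx₂.le⟩
  exact ⟨x, ⟨hsub hx, hx0⟩, fun y hy => hmono.injOn hy.1 (hsub hx) (hy.2.trans hx0.symm)⟩

namespace Real

lemma cot_add_of_sin_eq_zero {x₀ : ℝ} (h : sin x₀ = 0) (t : ℝ) : cot (x₀ + t) = cot t := by
  have hc : cos x₀ ≠ 0 := by
    intro hc
    simpa [h, hc] using sin_sq_add_cos_sq x₀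
  rw [cot_eq_cos_div_sin, cot_eq_cos_div_sin, sin_add, cos_add, h, zero_mul, zero_mul, sub_zero,
    zero_add, mul_div_mul_left _ _ hc]

lemma tendsto_cot_nhdsGT_zero : Tendsto cot (𝓝[>] 0) atTop := by
  have hsin : Tendsto sin (𝓝[>] 0) (𝓝[>] 0) := by
    refine tendsto_nhdsWithin_of_tendsto_nhds_of_eventually_within _ ?_ ?_
    · exact (continuous_sin.tendsto' 0 0 sin_zero).mono_left nhdsWithin_le_nhds
    · filter_upwards [Ioo_mem_nhdsGT pi_pos] with x hx using sin_pos_of_mem_Ioo hx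
  have hcos : Tendsto cos (𝓝[>] 0) (𝓝 1) :=
    (continuous_cos.tendsto' 0 1 cos_zero).mono_left nhdsWithin_le_nhds
  simpa only [Pi.inv_apply, ← div_eq_inv_mul, ← cot_eq_cos_div_sin] using
    hsin.inv_tendsto_nhdsGT_zero.atTop_mul_pos one_pos hcos

lemma tendsto_cot_nhdsLT_zero : Tendsto cot (𝓝[<] 0) atBot := by
  have hsin : Tendsto sin (𝓝[<] 0) (𝓝[<] 0) := by
    refine tendsto_nhdsWithin_of_tendsto_nhds_of_eventually_within _ ?_ ?_
    · exact (continuous_sin.tendsto' 0 0 sin_zero).mono_left nhdsWithin_le_nhds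
    · filter_upwards [Ioo_mem_nhdsLT (neg_lt_zero.2 pi_pos)] with x hx
      exact sin_neg_of_neg_of_neg_pi_lt hx.2 hx.1
  have hcos : Tendsto cos (𝓝[<] 0) (𝓝 1) :=
    (continuous_cos.tendsto' 0 1 cos_zero).mono_left nhdsWithin_le_nhds
  simpa only [Pi.inv_apply, ← div_eq_inv_mul, ← cot_eq_cos_div_sin] using
    hsin.inv_tendsto_nhdsLT_zero.atBot_mul_pos one_pos hcos

lemma tendsto_cot_nhdsGT {x₀ : ℝ} (h : sin x₀ = 0) : Tendsto cot (𝓝[>] x₀) atTop := by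
  rw [← add_zero x₀, ← map_add_left_nhdsGT, tendsto_map'_iff]
  simpa only [Function.comp_def, add_zero, cot_add_of_sin_eq_zero h] using tendsto_cot_nhdsGT_zero

lemma tendsto_cot_nhdsLT {x₀ : ℝ} (h : sin x₀ = 0) : Tendsto cot (𝓝[<] x₀) atBot := by
  rw [← add_zero x₀, ← map_add_left_nhdsLT, tendsto_map'_iff]
  simpa only [Function.comp_def, add_zero, cot_add_of_sin_eq_zero h] using tendsto_cot_nhdsLT_zero

lemma sin_half_mul_ne_zero_of_mem_Ioo_zero {β τ : ℝ} (hβ : 0 < β)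
    (hτ : τ ∈ Ioo 0 (2 * π / β)) : sin (β * τ / 2) ≠ 0 := by
  have := (lt_div_iff₀' hβ).1 hτ.2
  exact (sin_pos_of_pos_of_lt_pi (by nlinarith [hτ.1]) (by linarith)).ne'

lemma sin_half_mul_ne_zero_of_mem_Ioo_two_pi_div {β τ : ℝ} (hβ : 0 < β)
    (hτ : τ ∈ Ioo (2 * π / β) (4 * π / β)) : sin (β * τ / 2) ≠ 0 := by
  have h₁ := (div_lt_iff₀' hβ).1 hτ.1
  have h₂ := (lt_div_iff₀' hβ).1 hτ.2
  rw [← sin_sub_two_pi]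
  exact (sin_neg_of_neg_of_neg_pi_lt (by linarith) (by linarith)).ne

end Real

-- `psiSum n b r τ` unfolds to `∑ i ∈ Finset.Icc 1 n, r i ^ 2 / 2 * psiTerm (b i) τ`.
noncomputable def psiTerm (β τ : ℝ) : ℝ :=
  3 * τ - β * τ ^ 2 * cos (β * τ / 2) / sin (β * τ / 2) - sin (β * τ) / β

lemma psiTerm_eq_sub_mul_cot (β : ℝ) :
    psiTerm β = fun τ => (3 * τ - sin (β * τ) / β) - β * τ ^ 2 * cot (β * τ / 2) := by
  ext τ
  rw [psiTerm, cot_eq_cos_div_sin, mul_div_assoc]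
  ring

lemma hasDerivAt_psiTerm {β τ : ℝ} (hβ : β ≠ 0) (hs : sin (β * τ / 2) ≠ 0) :
    HasDerivAt (psiTerm β)
      ((2 * (β * τ / 2 - sin (β * τ / 2) * cos (β * τ / 2)) ^ 2 + 4 * sin (β * τ / 2) ^ 4) /
        sin (β * τ / 2) ^ 2) τ := by
  have hx : HasDerivAt (fun t => β * t / 2) (β / 2) τ := by
    simpa using ((hasDerivAt_id τ).const_mul β).div_const 2
  have hx' : HasDerivAt (fun t => β * t) β τ := by
    simpa using (hasDerivAt_id τ).const_mul β
  refine ((((hasDerivAt_id τ).const_mul 3).sub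
    ((((hasDerivAt_pow 2 τ).const_mul β).mul ((hasDerivAt_cos _).comp τ hx)).div
      ((hasDerivAt_sin _).comp τ hx) hs)).sub
        (((hasDerivAt_sin _).comp τ hx').div_const β)).congr_deriv ?_
  have hcos : cos (β * τ) = 1 - 2 * sin (β * τ / 2) ^ 2 := by
    rw [← cos_two_mul_eq_one_sub]
    ring_nf
  simp only [Function.comp_apply, Pi.mul_apply, hcos]
  field_simp
  linear_combination (β ^ 2 * τ ^ 2 - 4 * sin (β * τ / 2) ^ 2) * sin_sq_add_cos_sq (β * τ / 2)

lemma psiTerm_strictMonoOn {β : ℝ} (hβ : β ≠ 0) {s : Set ℝ} (hs : Convex ℝ s)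
    (hsin : ∀ τ ∈ s, sin (β * τ / 2) ≠ 0) : StrictMonoOn (psiTerm β) s :=
  strictMonoOn_of_hasDerivWithinAt_pos hs
    (fun τ hτ => (hasDerivAt_psiTerm hβ (hsin τ hτ)).continuousAt.continuousWithinAt)
    (fun τ hτ => (hasDerivAt_psiTerm hβ (hsin τ (interior_subset hτ))).hasDerivWithinAt)
    (fun τ hτ => by have := hsin τ (interior_subset hτ); positivity)

lemma tendsto_psiTerm_nhdsGT_of_sin_eq_zero {β τ₀ : ℝ} (hβ : 0 < β) (hτ₀ : τ₀ ≠ 0)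
    (hs : sin (β * τ₀ / 2) = 0) : Tendsto (psiTerm β) (𝓝[>] τ₀) atBot := by
  have hcot : Tendsto (fun τ => cot (β * τ / 2)) (𝓝[>] τ₀) atTop :=
    (tendsto_cot_nhdsGT hs).comp <|
      (by fun_prop : Continuous fun τ => β * τ / 2).continuousWithinAt.tendsto_nhdsWithin
        fun τ (hτ : τ₀ < τ) => show β * τ₀ / 2 < β * τ / 2 by gcongr
  have hlin : Tendsto (fun τ => 3 * τ - sin (β * τ) / β) (𝓝[>] τ₀) (𝓝 _) :=
    (by fun_prop : Continuous fun τ => 3 * τ - sin (β * τ) / β).continuousWithinAt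
  have hcoef : Tendsto (fun τ => β * τ ^ 2) (𝓝[>] τ₀) (𝓝 (β * τ₀ ^ 2)) :=
    (by fun_prop : Continuous fun τ : ℝ => β * τ ^ 2).continuousWithinAt
  simpa only [psiTerm_eq_sub_mul_cot, sub_eq_add_neg, Function.comp_def] using
    hlin.add_atBot (tendsto_neg_atTop_atBot.comp (hcoef.pos_mul_atTop (by positivity) hcot))

lemma tendsto_psiTerm_nhdsLT_of_sin_eq_zero {β τ₀ : ℝ} (hβ : 0 < β) (hτ₀ : τ₀ ≠ 0)
    (hs : sin (β * τ₀ / 2) = 0) : Tendsto (psiTerm β) (𝓝[<] τ₀) atTop := by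
  have hcot : Tendsto (fun τ => cot (β * τ / 2)) (𝓝[<] τ₀) atBot :=
    (tendsto_cot_nhdsLT hs).comp <|
      (by fun_prop : Continuous fun τ => β * τ / 2).continuousWithinAt.tendsto_nhdsWithin
        fun τ (hτ : τ < τ₀) => show β * τ / 2 < β * τ₀ / 2 by gcongr
  have hlin : Tendsto (fun τ => 3 * τ - sin (β * τ) / β) (𝓝[<] τ₀) (𝓝 _) :=
    (by fun_prop : Continuous fun τ => 3 * τ - sin (β * τ) / β).continuousWithinAt
  have hcoef : Tendsto (fun τ => β * τ ^ 2) (𝓝[<] τ₀) (𝓝 (β * τ₀ ^ 2)) :=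
    (by fun_prop : Continuous fun τ : ℝ => β * τ ^ 2).continuousWithinAt
  simpa only [psiTerm_eq_sub_mul_cot, sub_eq_add_neg, Function.comp_def] using
    hlin.add_atTop (tendsto_neg_atBot_atTop.comp (hcoef.pos_mul_atBot (by positivity) hcot))

lemma isBoundedUnder_le_const_mul_psiTerm_nhdsGT {w β τ₀ : ℝ} (hw : 0 < w) (hβ : 0 < β)
    (hτ₀ : τ₀ ≠ 0) : IsBoundedUnder (· ≤ ·) (𝓝[>] τ₀) fun τ => w * psiTerm β τ := by
  by_cases hs : sin (β * τ₀ / 2) = 0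
  · exact ((tendsto_psiTerm_nhdsGT_of_sin_eq_zero hβ hτ₀ hs).const_mul_atBot hw)
      |>.isBoundedUnder_le_atBot
  · exact ((hasDerivAt_psiTerm hβ.ne' hs).continuousAt.tendsto.mono_left nhdsWithin_le_nhds
      |>.const_mul w).isBoundedUnder_le

lemma isBoundedUnder_ge_const_mul_psiTerm_nhdsLT {w β τ₀ : ℝ} (hw : 0 < w) (hβ : 0 < β)
    (hτ₀ : τ₀ ≠ 0) : IsBoundedUnder (· ≥ ·) (𝓝[<] τ₀) fun τ => w * psiTerm β τ := by
  by_cases hs : sin (β * τ₀ / 2) = 0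
  · exact ((tendsto_psiTerm_nhdsLT_of_sin_eq_zero hβ hτ₀ hs).const_mul_atTop hw)
      |>.isBoundedUnder_ge_atTop
  · exact ((hasDerivAt_psiTerm hβ.ne' hs).continuousAt.tendsto.mono_left nhdsWithin_le_nhds
      |>.const_mul w).isBoundedUnder_ge

section psiSum

variable {n : ℕ} {b r : ℕ → ℝ}

lemma continuousOn_psiSum (hb : ∀ i ∈ Finset.Icc 1 n, b i ≠ 0) {s : Set ℝ}
    (hsin : ∀ τ ∈ s, ∀ i ∈ Finset.Icc 1 n, sin (b i * τ / 2) ≠ 0) :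
    ContinuousOn (psiSum n b r) s :=
  continuousOn_finsetSum _ fun i hi τ hτ =>
    ((hasDerivAt_psiTerm (hb i hi) (hsin τ hτ i hi)).continuousAt.const_mul _).continuousWithinAt

lemma strictMonoOn_psiSum (hn : 1 ≤ n) (hb : ∀ i ∈ Finset.Icc 1 n, b i ≠ 0)
    (hr : ∀ i ∈ Finset.Icc 1 n, r i ≠ 0) {s : Set ℝ} (hs : Convex ℝ s)
    (hsin : ∀ τ ∈ s, ∀ i ∈ Finset.Icc 1 n, sin (b i * τ / 2) ≠ 0) :
    StrictMonoOn (psiSum n b r) s := fun x hx y hy hxy =>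
  sum_lt_sum_of_nonempty (Finset.nonempty_Icc.2 hn) fun i hi => by
    have := hr i hi
    exact mul_lt_mul_of_pos_left
      (psiTerm_strictMonoOn (hb i hi) hs (fun τ hτ => hsin τ hτ i hi) hx hy hxy) (by positivity)

lemma tendsto_psiSum_nhdsGT (hb : ∀ i ∈ Finset.Icc 1 n, 0 < b i)
    (hr : ∀ i ∈ Finset.Icc 1 n, r i ≠ 0) {τ₀ : ℝ} (hτ₀ : τ₀ ≠ 0) {i₀ : ℕ}
    (hi₀ : i₀ ∈ Finset.Icc 1 n) (hs : sin (b i₀ * τ₀ / 2) = 0) :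
    Tendsto (psiSum n b r) (𝓝[>] τ₀) atBot := by
  have hw : ∀ i ∈ Finset.Icc 1 n, 0 < r i ^ 2 / 2 := fun i hi => by have := hr i hi; positivity
  exact Tendsto.finset_sum_atBot hi₀
    ((tendsto_psiTerm_nhdsGT_of_sin_eq_zero (hb i₀ hi₀) hτ₀ hs).const_mul_atBot (hw i₀ hi₀))
    fun i hi => isBoundedUnder_le_const_mul_psiTerm_nhdsGT (hw i hi) (hb i hi) hτ₀

lemma tendsto_psiSum_nhdsLT (hb : ∀ i ∈ Finset.Icc 1 n, 0 < b i)
    (hr : ∀ i ∈ Finset.Icc 1 n, r i ≠ 0) {τ₀ : ℝ} (hτ₀ : τ₀ ≠ 0) {i₀ : ℕ}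
    (hi₀ : i₀ ∈ Finset.Icc 1 n) (hs : sin (b i₀ * τ₀ / 2) = 0) :
    Tendsto (psiSum n b r) (𝓝[<] τ₀) atTop := by
  have hw : ∀ i ∈ Finset.Icc 1 n, 0 < r i ^ 2 / 2 := fun i hi => by have := hr i hi; positivity
  exact Tendsto.finset_sum_atTop hi₀
    ((tendsto_psiTerm_nhdsLT_of_sin_eq_zero (hb i₀ hi₀) hτ₀ hs).const_mul_atTop (hw i₀ hi₀))
    fun i hi => isBoundedUnder_ge_const_mul_psiTerm_nhdsLT (hw i hi) (hb i hi) hτ₀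

end psiSum

/-- Fix `n ≥ 2` and reals `b₁ > b₂ ≥ … ≥ bₙ > 0`, and `r ∈ ℝⁿ` with
`rᵢ > 0` for all `i`. Set `T = min(2π/b₂, 4π/b₁)`. Then every `τ ∈ (2π/b₁, T)`
satisfies `sin(bᵢτ/2) ≠ 0` for all `i`, and there is exactly one `τ ∈ (2π/b₁, T)`
with `ψ(τ, r) = 0`. -/
theorem statement8 (n : ℕ) (hn : 2 ≤ n) (b : ℕ → ℝ)
    (hpos : ∀ i ∈ Finset.Icc 1 n, 0 < b i)
    (h12 : b 2 < b 1)
    (hanti : ∀ i j, 2 ≤ i → i ≤ j → j ≤ n → b j ≤ b i)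
    (r : ℕ → ℝ) (hr : ∀ i ∈ Finset.Icc 1 n, 0 < r i) :
    (∀ τ ∈ Set.Ioo (2 * Real.pi / b 1) (min (2 * Real.pi / b 2) (4 * Real.pi / b 1)),
      ∀ i ∈ Finset.Icc 1 n, Real.sin (b i * τ / 2) ≠ 0) ∧
    (∃! τ : ℝ,
      τ ∈ Set.Ioo (2 * Real.pi / b 1) (min (2 * Real.pi / b 2) (4 * Real.pi / b 1)) ∧
      psiSum n b r τ = 0) := by
  have h1 : 1 ∈ Finset.Icc 1 n := Finset.mem_Icc.2 ⟨le_rfl, by omega⟩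
  have h2 : 2 ∈ Finset.Icc 1 n := Finset.mem_Icc.2 ⟨by norm_num, hn⟩
  have hb1 := hpos 1 h1
  have hb2 := hpos 2 h2
  set T := min (2 * π / b 2) (4 * π / b 1)
  have hwindow : ∀ τ ∈ Ioo (2 * π / b 1) T, ∀ i ∈ Finset.Icc 1 n, sin (b i * τ / 2) ≠ 0 := by
    intro τ hτ i hi
    obtain ⟨hi1, hin⟩ := Finset.mem_Icc.1 hi
    rcases hi1.eq_or_lt with rfl | hi2
    · exact sin_half_mul_ne_zero_of_mem_Ioo_two_pi_div hb1 ⟨hτ.1, hτ.2.trans_le (min_le_right _ _)⟩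
    · refine sin_half_mul_ne_zero_of_mem_Ioo_zero (hpos i hi)
        ⟨(by positivity : 0 < 2 * π / b 1).trans hτ.1, hτ.2.trans_le ((min_le_left _ _).trans ?_)⟩
      exact div_le_div_of_nonneg_left (by positivity) (hpos i hi) (hanti 2 i le_rfl hi2 hin)
  refine ⟨hwindow, ?_⟩
  have haT : 2 * π / b 1 < T := lt_min (div_lt_div_of_pos_left (by positivity) hb2 h12)
    (div_lt_div_of_pos_right (by linarith [pi_pos]) hb1)
  have hsin_a : sin (b 1 * (2 * π / b 1) / 2) = 0 := by
    rw [mul_div_cancel₀ _ hb1.ne', mul_div_cancel_left₀ _ two_ne_zero, sin_pi]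
  obtain ⟨i₀, hi₀, hsin_T⟩ : ∃ i ∈ Finset.Icc 1 n, sin (b i * T / 2) = 0 := by
    obtain hT | hT : T = 2 * π / b 2 ∨ T = 4 * π / b 1 := min_choice _ _
    · refine ⟨2, h2, ?_⟩
      rw [hT, mul_div_cancel₀ _ hb2.ne', mul_div_cancel_left₀ _ two_ne_zero, sin_pi]
    · refine ⟨1, h1, ?_⟩
      rw [hT, mul_div_cancel₀ _ hb1.ne', show 4 * π / 2 = 2 * π by ring, sin_two_pi]
  have hb : ∀ i ∈ Finset.Icc 1 n, b i ≠ 0 := fun i hi => (hpos i hi).ne'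
  have hr₀ : ∀ i ∈ Finset.Icc 1 n, r i ≠ 0 := fun i hi => (hr i hi).ne'
  have hmono := strictMonoOn_psiSum (r := r) (by omega) hb hr₀ (convex_Ioo _ _) hwindow
  exact hmono.existsUnique_mem_Ioo_eq_zero haT (continuousOn_psiSum hb hwindow)
    (tendsto_psiSum_nhdsGT hpos hr₀ (by positivity) h1 hsin_a)
    (tendsto_psiSum_nhdsLT hpos hr₀ ((by positivity : 0 < 2 * π / b 1).trans haT).ne' hi₀ hsin_T)
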